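/- Assume (P_n) satisfies the three-term recurrence with coefficients A_n ∈ ℝ, r_n > 0, and assume there is a constant M with |P_n(x)| ≤ M for all n and all x in the support of μ. If (N_k) is a sequence of indices with r_{N_k + 1} → 0 as k → ∞, then for every ε > 0 and every x in the support of μ, lim_{k→∞} ∫_{{y : |y − x| ≥ ε}} |D_{N_k}(x,y)| dμ(y) = 0, where D_N(x,y) = Σ_{n=0}^{N} P_n(x)P_n(y). -/

import Mathlib

/-!
By the Christoffel–Darboux formula,
`(x - y) D_N(x, y) = r_{N+1} (P_{N+1}(x) P_N(y) - P_N(x) P_{N+1}(y))`, so on the support of `μ`,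
away from the diagonal `|y - x| ≥ ε`, the kernel is bounded by `2 M² |r_{N+1}| / ε`.
Integrating this bound against the probability measure `μ` gives the claim along `r_{N_k + 1} → 0`.
-/

open MeasureTheory Polynomial Set Filter

/-- The (topological) support of a measure on ℝ. -/
def measSupport (μ : Measure ℝ) : Set ℝ := {x | ∀ U ∈ nhds x, 0 < μ U}

lemma measSupport_eq_support (μ : Measure ℝ) : measSupport μ = μ.support := by
  ext x
  exact (Measure.mem_support_iff_forall x).symm

lemma ae_mem_measSupport (μ : Measure ℝ) : ∀ᵐ x ∂μ, x ∈ measSupport μ := by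
  rw [measSupport_eq_support]
  exact Measure.support_mem_ae

def dirichletKernel {R : Type*} [CommRing R] (p : ℕ → R → R) (N : ℕ) (x y : R) : R :=
  ∑ n ∈ Finset.range (N + 1), p n x * p n y

section ThreeTermRecurrence

variable {R : Type*} [CommRing R] {p : ℕ → R → R} {r A : ℕ → R}

/-- The Christoffel–Darboux formula. At `n = 0` the recurrence contains
`r 0 * p (0 - 1) x = r 0 * p 0 x` (truncated subtraction), which cancels between `x` and `y`. -/
theorem sub_mul_dirichletKernel
    (hrec : ∀ n x, x * p n x = r (n + 1) * p (n + 1) x + A n * p n x + r n * p (n - 1) x)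
    (N : ℕ) (x y : R) :
    (x - y) * dirichletKernel p N x y =
      r (N + 1) * (p (N + 1) x * p N y - p N x * p (N + 1) y) := by
  induction N with
  | zero =>
    simp only [dirichletKernel, zero_add, Finset.sum_range_one]
    linear_combination p 0 y * hrec 0 x - p 0 x * hrec 0 y
  | succ N ih =>
    have hx := hrec (N + 1) x
    have hy := hrec (N + 1) y
    simp only [Nat.add_sub_cancel] at hx hy
    rw [dirichletKernel, Finset.sum_range_succ, mul_add, ← dirichletKernel, ih]
    linear_combination p (N + 1) y * hx - p (N + 1) x * hy

end ThreeTermRecurrence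

section Bounds

variable {p : ℕ → ℝ → ℝ} {r A : ℕ → ℝ} {M ε : ℝ}

theorem abs_dirichletKernel_le
    (hrec : ∀ n x, x * p n x = r (n + 1) * p (n + 1) x + A n * p n x + r n * p (n - 1) x)
    (hε : 0 < ε) {x y : ℝ} (hxy : ε ≤ |y - x|) (hx : ∀ n, |p n x| ≤ M) (hy : ∀ n, |p n y| ≤ M)
    (N : ℕ) :
    |dirichletKernel p N x y| ≤ 2 * M ^ 2 / ε * |r (N + 1)| := by
  have hnum : |p (N + 1) x * p N y - p N x * p (N + 1) y| ≤ 2 * M ^ 2 := by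
    have hM : 0 ≤ M := (abs_nonneg _).trans (hx 0)
    calc |p (N + 1) x * p N y - p N x * p (N + 1) y|
        ≤ |p (N + 1) x| * |p N y| + |p N x| * |p (N + 1) y| := by
          rw [← abs_mul, ← abs_mul]
          exact abs_sub _ _
      _ ≤ M * M + M * M := by gcongr <;> simp only [hx, hy]
      _ = 2 * M ^ 2 := by ring
  have hCD : |x - y| * |dirichletKernel p N x y| ≤ |r (N + 1)| * (2 * M ^ 2) := by
    rw [← abs_mul, sub_mul_dirichletKernel hrec, abs_mul]
    gcongr
  rw [abs_sub_comm] at hxy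
  rw [div_mul_eq_mul_div, le_div_iff₀ hε]
  calc |dirichletKernel p N x y| * ε ≤ |x - y| * |dirichletKernel p N x y| := by
        rw [mul_comm]
        gcongr
    _ ≤ 2 * M ^ 2 * |r (N + 1)| := by linarith

theorem setIntegral_abs_dirichletKernel_le (μ : Measure ℝ) [IsProbabilityMeasure μ]
    (hrec : ∀ n x, x * p n x = r (n + 1) * p (n + 1) x + A n * p n x + r n * p (n - 1) x)
    (hbd : ∀ n, ∀ x ∈ measSupport μ, |p n x| ≤ M) (hε : 0 < ε) {x : ℝ} (hx : x ∈ measSupport μ)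
    (N : ℕ) :
    ∫ y in {y | ε ≤ |y - x|}, |dirichletKernel p N x y| ∂μ ≤ 2 * M ^ 2 / ε * |r (N + 1)| := by
  have hae : ∀ᵐ y ∂μ, y ∈ {y | ε ≤ |y - x|} →
      ‖|dirichletKernel p N x y|‖ ≤ 2 * M ^ 2 / ε * |r (N + 1)| := by
    filter_upwards [ae_mem_measSupport μ] with y hy hxy
    rw [Real.norm_eq_abs, abs_abs]
    exact abs_dirichletKernel_le hrec hε hxy (hbd · x hx) (hbd · y hy) N
  calc ∫ y in {y | ε ≤ |y - x|}, |dirichletKernel p N x y| ∂μ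
      ≤ ‖∫ y in {y | ε ≤ |y - x|}, |dirichletKernel p N x y| ∂μ‖ := Real.le_norm_self _
    _ ≤ 2 * M ^ 2 / ε * |r (N + 1)| * μ.real {y | ε ≤ |y - x|} :=
      norm_setIntegral_le_of_norm_le_const_ae' (measure_lt_top _ _) hae
    _ ≤ 2 * M ^ 2 / ε * |r (N + 1)| :=
      mul_le_of_le_one_right (by positivity) measureReal_le_one

end Bounds

theorem dirichlet_kernel_localization_general (μ : Measure ℝ) [IsProbabilityMeasure μ]
    (P : ℕ → Polynomial ℝ)
    (r A : ℕ → ℝ)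
    (hrec : ∀ (n : ℕ) (x : ℝ), x * (P n).eval x =
      r (n + 1) * (P (n + 1)).eval x + A n * (P n).eval x + r n * (P (n - 1)).eval x)
    (M : ℝ) (hbd : ∀ n : ℕ, ∀ x ∈ measSupport μ, |(P n).eval x| ≤ M)
    (Nk : ℕ → ℕ) (hNk : Tendsto (fun k => r (Nk k + 1)) atTop (nhds 0)) :
    ∀ ε > 0, ∀ x ∈ measSupport μ,
      Tendsto (fun k => ∫ y in {y : ℝ | ε ≤ |y - x|},
          |∑ n ∈ Finset.range (Nk k + 1), (P n).eval x * (P n).eval y| ∂μ)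
        atTop (nhds 0) := by
  intro ε hε x hx
  have hbound : Tendsto (fun k => 2 * M ^ 2 / ε * |r (Nk k + 1)|) atTop (nhds 0) := by
    simpa using hNk.abs.const_mul (2 * M ^ 2 / ε)
  exact squeeze_zero (fun k => integral_nonneg fun y => abs_nonneg _)
    (fun k => setIntegral_abs_dirichletKernel_le (p := fun n t => (P n).eval t) μ hrec hbd hε hx
      (Nk k)) hbound

theorem dirichlet_kernel_localization (μ : Measure ℝ) [IsProbabilityMeasure μ]
    (hsupp : μ (Icc (0:ℝ) 1)ᶜ = 0) (hinf : (measSupport μ).Infinite)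
    (P : ℕ → Polynomial ℝ)
    (hdeg : ∀ n, (P n).natDegree = n)
    (hlead : ∀ n, 0 < (P n).leadingCoeff)
    (horth : ∀ m n, ∫ x, (P m).eval x * (P n).eval x ∂μ = if m = n then 1 else 0)
    (r A : ℕ → ℝ) (hr0 : r 0 = 0) (hr : ∀ n, 0 < r (n + 1))
    (hrec : ∀ (n : ℕ) (x : ℝ), x * (P n).eval x =
      r (n + 1) * (P (n + 1)).eval x + A n * (P n).eval x + r n * (P (n - 1)).eval x)
    (M : ℝ) (hbd : ∀ n : ℕ, ∀ x ∈ measSupport μ, |(P n).eval x| ≤ M)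
    (Nk : ℕ → ℕ) (hNk : Tendsto (fun k => r (Nk k + 1)) atTop (nhds 0)) :
    ∀ ε > 0, ∀ x ∈ measSupport μ,
      Tendsto (fun k => ∫ y in {y : ℝ | ε ≤ |y - x|},
          |∑ n ∈ Finset.range (Nk k + 1), (P n).eval x * (P n).eval y| ∂μ)
        atTop (nhds 0) :=
  dirichlet_kernel_localization_general μ P r A hrec M hbd Nk hNk
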